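/- arXiv:2507.21514 — 4 statements merged into one kernel-verified Lean document; each statement's English description precedes it below -/
import Mathlib

section
/- Define a_{k,l}(r,n) := Σ_{0 ≤ j ≤ l/2} (-1)^j C(l+k-2-j, l-2j) C(j+k-2, k-2) n^j r^(l-2j). Then for k ≥ 3 and l ≥ 2, the recurrence a_{k,l}(r,n) - r·a_{k,l-1}(r,n) + n·a_{k,l-2}(r,n) = a_{k-1,l}(r,n) holds. -/
open Finset in
/-- `a_{k,l}(r,n) = Σ_{0 ≤ j ≤ l/2} (-1)^j C(l+k-2-j, l-2j) C(j+k-2, k-2) n^j r^(l-2j)`. -/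
noncomputable def gegenA (k l : ℕ) (r n : ℝ) : ℝ :=
  ∑ j ∈ Finset.range (l / 2 + 1),
    (-1 : ℝ) ^ j * (Nat.choose (l + k - 2 - j) (l - 2 * j) : ℝ) *
      (Nat.choose (j + k - 2) (k - 2) : ℝ) * n ^ j * r ^ (l - 2 * j)

lemma ext_trunc {M : Type*} [AddCommMonoid M] (m : ℕ) (f : ℕ → M) :
    ∑ j ∈ Finset.range m, f j = ∑ j ∈ Finset.range (m+1), if j < m then f j else 0 := by
  rw [Finset.sum_range_succ, if_neg (lt_irrefl m), add_zero]
  exact Finset.sum_congr rfl fun j hj => (if_pos (Finset.mem_range.mp hj)).symm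

lemma ext_shift {M : Type*} [AddCommMonoid M] (m : ℕ) (f : ℕ → M) :
    ∑ j ∈ Finset.range m, f j = ∑ j ∈ Finset.range (m+1), if j = 0 then 0 else f (j-1) := by
  rw [Finset.sum_range_succ']
  simp

theorem stmt1 (k l : ℕ) (hk : 3 ≤ k) (hl : 2 ≤ l) (r n : ℝ) :
    gegenA k l r n - r * gegenA k (l - 1) r n + n * gegenA k (l - 2) r n
      = gegenA (k - 1) l r n := by
  obtain ⟨K, rfl⟩ : ∃ K, k = K + 3 := ⟨k - 3, by omega⟩
  rcases Nat.even_or_odd l with h | h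
  · have h2 := Nat.even_iff.mp h
    obtain ⟨m, hm1, rfl⟩ : ∃ m, 1 ≤ m ∧ l = 2 * m := ⟨l / 2, by omega, by omega⟩
    simp only [gegenA]
    rw [show 2*m/2 = m from by omega, show (2*m-1)/2 = m - 1 from by omega,
        show (2*m-2)/2 = m-1 from by omega, show m - 1 + 1 = m from by omega]
    rw [Finset.mul_sum, Finset.mul_sum, ext_trunc m, ext_shift m,
        ← Finset.sum_sub_distrib, ← Finset.sum_add_distrib]
    refine Finset.sum_congr rfl fun j hj => ?_
    have hjm : j ≤ m := by have := Finset.mem_range.mp hj; omega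
    rcases j with _ | i
    · rw [if_pos (by omega : 0 < m), if_pos rfl]
      rw [show 2*m + (K+3) - 2 - 0 = (2*m+K)+1 from by omega,
          show 2*m - 2*0 = (2*m-1)+1 from by omega,
          show 2*m-1 + (K+3) - 2 - 0 = 2*m+K from by omega,
          show 2*m-1 - 2*0 = 2*m-1 from by omega,
          show 2*m + (K+3-1) - 2 - 0 = 2*m+K from by omega,
          show 0 + (K+3) - 2 = K+1 from by omega,
          show K+3-2 = K+1 from by omega,
          show 0 + (K+3-1) - 2 = K from by omega,
          show K+3-1-2 = K from by omega,
          Nat.choose_succ_succ' (2*m+K) (2*m-1), Nat.choose_self, Nat.choose_self]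
      push_cast
      ring
    · rw [if_neg (Nat.succ_ne_zero i)]
      simp only [Nat.add_sub_cancel]
      rcases lt_or_eq_of_le (by omega : i + 1 ≤ m) with hlt | heq
      · rw [if_pos hlt]
        rw [show 2*m + (K+3) - 2 - (i+1) = (2*m+K-i-1)+1 from by omega,
            show 2*m - 2*(i+1) = (2*m-2*i-3)+1 from by omega,
            show 2*m-1 + (K+3) - 2 - (i+1) = 2*m+K-i-1 from by omega,
            show 2*m-1 - 2*(i+1) = 2*m-2*i-3 from by omega,
            show 2*m-2 + (K+3) - 2 - i = 2*m+K-i-1 from by omega,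
            show 2*m-2 - 2*i = (2*m-2*i-3)+1 from by omega,
            show 2*m + (K+3-1) - 2 - (i+1) = 2*m+K-i-1 from by omega,
            show (i+1) + (K+3) - 2 = (i+K+1)+1 from by omega,
            show K+3-2 = K+1 from by omega,
            show i + (K+3) - 2 = i+K+1 from by omega,
            show (i+1) + (K+3-1) - 2 = i+K+1 from by omega,
            show K+3-1-2 = K from by omega,
            Nat.choose_succ_succ' (2*m+K-i-1) (2*m-2*i-3),
            Nat.choose_succ_succ' (i+K+1) K]
        push_cast
        ring
      · rw [if_neg (by omega : ¬ i + 1 < m)]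
        rw [show 2*m + (K+3) - 2 - (i+1) = (m+K)+1 from by omega,
            show 2*m - 2*(i+1) = 0 from by omega,
            show 2*m-2 + (K+3) - 2 - i = m+K from by omega,
            show 2*m-2 - 2*i = 0 from by omega,
            show 2*m + (K+3-1) - 2 - (i+1) = m+K from by omega,
            show (i+1) + (K+3) - 2 = (i+K+1)+1 from by omega,
            show K+3-2 = K+1 from by omega,
            show i + (K+3) - 2 = i+K+1 from by omega,
            show (i+1) + (K+3-1) - 2 = i+K+1 from by omega,
            show K+3-1-2 = K from by omega,
            Nat.choose_zero_right, Nat.choose_zero_right,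
            Nat.choose_succ_succ' (i+K+1) K]
        push_cast
        ring
  · have h2 := Nat.odd_iff.mp h
    obtain ⟨m, hm1, rfl⟩ : ∃ m, 1 ≤ m ∧ l = 2 * m + 1 := ⟨l / 2, by omega, by omega⟩
    simp only [gegenA]
    rw [show (2*m+1)/2 = m from by omega, show (2*m+1-1)/2 = m from by omega,
        show (2*m+1-2)/2 = m-1 from by omega, show m - 1 + 1 = m from by omega]
    rw [Finset.mul_sum, Finset.mul_sum, ext_shift m,
        ← Finset.sum_sub_distrib, ← Finset.sum_add_distrib]
    refine Finset.sum_congr rfl fun j hj => ?_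
    have hjm : j ≤ m := by have := Finset.mem_range.mp hj; omega
    rcases j with _ | i
    · rw [if_pos rfl]
      rw [show 2*m+1 + (K+3) - 2 - 0 = (2*m+K+1)+1 from by omega,
          show 2*m+1 - 2*0 = (2*m)+1 from by omega,
          show 2*m+1-1 + (K+3) - 2 - 0 = 2*m+K+1 from by omega,
          show 2*m+1-1 - 2*0 = 2*m from by omega,
          show 2*m+1 + (K+3-1) - 2 - 0 = 2*m+K+1 from by omega,
          show 0 + (K+3) - 2 = K+1 from by omega,
          show K+3-2 = K+1 from by omega,
          show 0 + (K+3-1) - 2 = K from by omega,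
          show K+3-1-2 = K from by omega,
          Nat.choose_succ_succ' (2*m+K+1) (2*m), Nat.choose_self, Nat.choose_self]
      push_cast
      ring
    · rw [if_neg (Nat.succ_ne_zero i)]
      simp only [Nat.add_sub_cancel]
      rw [show 2*m+1 + (K+3) - 2 - (i+1) = (2*m+K-i)+1 from by omega,
          show 2*m+1 - 2*(i+1) = (2*m-2*i-2)+1 from by omega,
          show 2*m + (K+3) - 2 - (i+1) = 2*m+K-i from by omega,
          show 2*m - 2*(i+1) = 2*m-2*i-2 from by omega,
          show 2*m+1-2 + (K+3) - 2 - i = 2*m+K-i from by omega,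
          show 2*m+1-2 - 2*i = (2*m-2*i-2)+1 from by omega,
          show 2*m+1 + (K+3-1) - 2 - (i+1) = 2*m+K-i from by omega,
          show (i+1) + (K+3) - 2 = (i+K+1)+1 from by omega,
          show K+3-2 = K+1 from by omega,
          show i + (K+3) - 2 = i+K+1 from by omega,
          show (i+1) + (K+3-1) - 2 = i+K+1 from by omega,
          show K+3-1-2 = K from by omega,
          Nat.choose_succ_succ' (2*m+K-i) (2*m-2*i-2),
          Nat.choose_succ_succ' (i+K+1) K]
      push_cast
      ring
end

section
/- Let Q_d denote the set of positive definite integral binary quadratic forms ax²+bxy+cy² of discriminant b²−4ac = −d, with the right action of PSL₂(ℤ) given by (Q∘γ)(x,y) = Q(Ax+By, Cx+Dy) for γ = [[A,B],[C,D]]. Then for every positive d with −d ≡ 0 or 1 (mod 4), the set of PSL₂(ℤ)-orbits Q_d/PSL₂(ℤ) is finite. -/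
/-- A binary quadratic form `[a,b,c]` is encoded as a triple `(a, b, c) : ℤ × ℤ × ℤ`,
representing `a x² + b x y + c y²`. -/
abbrev BQF : Type := ℤ × ℤ × ℤ

/-- The substitution action: `(Q ∘ γ)(x,y) = Q(Ax + By, Cx + Dy)` for
`γ = [[A,B],[C,D]] ∈ SL₂(ℤ)`. -/
def bqfAct (Q : BQF) (γ : Matrix.SpecialLinearGroup (Fin 2) ℤ) : BQF :=
  let A := γ.1 0 0; let B := γ.1 0 1; let C := γ.1 1 0; let D := γ.1 1 1
  (Q.1 * A ^ 2 + Q.2.1 * A * C + Q.2.2 * C ^ 2,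
   2 * Q.1 * A * B + Q.2.1 * (A * D + B * C) + 2 * Q.2.2 * C * D,
   Q.1 * B ^ 2 + Q.2.1 * B * D + Q.2.2 * D ^ 2)

/-- The set `Q_d` of positive definite integral binary quadratic forms of
discriminant `-d`. -/
def QD (d : ℤ) : Type := {Q : BQF // 0 < Q.1 ∧ Q.2.1 ^ 2 - 4 * Q.1 * Q.2.2 = -d}

/-- Two forms in `Q_d` are equivalent if they lie in the same `PSL₂(ℤ)`-orbit
(equivalently, the same `SL₂(ℤ)`-orbit, since `-I` acts trivially). -/
def bqfRel (d : ℤ) (Q Q' : QD d) : Prop :=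
  ∃ γ : Matrix.SpecialLinearGroup (Fin 2) ℤ, bqfAct Q.1 γ = Q'.1

lemma bqf_det (γ : Matrix.SpecialLinearGroup (Fin 2) ℤ) :
    γ.1 0 0 * γ.1 1 1 - γ.1 0 1 * γ.1 1 0 = 1 := by
  have := γ.2
  rwa [Matrix.det_fin_two] at this

lemma bqfAct_one (Q : BQF) : bqfAct Q 1 = Q := by
  simp [bqfAct, Matrix.SpecialLinearGroup.coe_one, Matrix.one_apply]

lemma bqfAct_mul (Q : BQF) (γ δ : Matrix.SpecialLinearGroup (Fin 2) ℤ) :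
    bqfAct Q (γ * δ) = bqfAct (bqfAct Q γ) δ := by
  simp only [bqfAct, Matrix.SpecialLinearGroup.coe_mul, Matrix.mul_apply, Fin.sum_univ_two]
  refine Prod.ext ?_ (Prod.ext ?_ ?_) <;> simp <;> ring

lemma bqfAct_disc (Q : BQF) (γ : Matrix.SpecialLinearGroup (Fin 2) ℤ) :
    (bqfAct Q γ).2.1 ^ 2 - 4 * (bqfAct Q γ).1 * (bqfAct Q γ).2.2
      = Q.2.1 ^ 2 - 4 * Q.1 * Q.2.2 := by
  have h := bqf_det γ
  simp only [bqfAct]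
  linear_combination (Q.2.1 ^ 2 - 4 * Q.1 * Q.2.2) *
    (γ.1 0 0 * γ.1 1 1 - γ.1 0 1 * γ.1 1 0 + 1) * h

lemma bqfAct_pos (d : ℤ) (hd : 0 < d) (Q : BQF) (hQ : 0 < Q.1)
    (hdisc : Q.2.1 ^ 2 - 4 * Q.1 * Q.2.2 = -d) (γ : Matrix.SpecialLinearGroup (Fin 2) ℤ) :
    0 < (bqfAct Q γ).1 := by
  have h := bqf_det γ
  set A := γ.1 0 0; set B := γ.1 0 1; set C := γ.1 1 0; set D := γ.1 1 1
  show 0 < Q.1 * A ^ 2 + Q.2.1 * A * C + Q.2.2 * C ^ 2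
  rcases eq_or_ne C 0 with hC | hC
  · have hA : A ≠ 0 := by
      intro hA; rw [hA, hC] at h; simp at h
    have : 0 < A ^ 2 := by positivity
    rw [hC]; nlinarith
  · have hC2 : 0 < C ^ 2 := by positivity
    nlinarith [sq_nonneg (2 * Q.1 * A + Q.2.1 * C)]

def matT (n : ℤ) : Matrix.SpecialLinearGroup (Fin 2) ℤ :=
  ⟨!![1, n; 0, 1], by simp [Matrix.det_fin_two_of]⟩

def matS : Matrix.SpecialLinearGroup (Fin 2) ℤ :=
  ⟨!![0, -1; 1, 0], by simp [Matrix.det_fin_two_of]⟩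

lemma bqfAct_T (Q : BQF) (n : ℤ) :
    bqfAct Q (matT n) = (Q.1, 2 * Q.1 * n + Q.2.1, Q.1 * n ^ 2 + Q.2.1 * n + Q.2.2) := by
  simp [bqfAct, matT]

lemma bqfAct_S (Q : BQF) : bqfAct Q matS = (Q.2.2, -Q.2.1, Q.1) := by
  simp [bqfAct, matS]

/-- The reduction algorithm: every positive definite form of discriminant `-d`
is equivalent to a reduced form. -/
lemma bqf_reduce (d : ℤ) (hd : 0 < d) : ∀ N : ℕ, ∀ Q : BQF, Q.1.toNat ≤ N →
    0 < Q.1 → Q.2.1 ^ 2 - 4 * Q.1 * Q.2.2 = -d →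
    ∃ γ, |(bqfAct Q γ).2.1| ≤ (bqfAct Q γ).1 ∧ (bqfAct Q γ).1 ≤ (bqfAct Q γ).2.2 := by
  intro N
  induction N with
  | zero => intro Q hN hpos _; omega
  | succ N ih =>
    intro Q hN hpos hdisc
    obtain ⟨a, b, c⟩ := Q
    simp only at hpos hdisc ⊢
    set n : ℤ := -((b + a) / (2 * a)) with hn
    have h2a : 0 < 2 * a := by linarith
    have hmod := Int.emod_def (b + a) (2 * a)
    have hb' : 2 * a * n + b = (b + a) % (2 * a) - a := by rw [hn]; linarith [hmod]
    have hb1 : -a ≤ 2 * a * n + b := by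
      have := Int.emod_nonneg (b + a) (by linarith : (2 * a) ≠ 0); omega
    have hb2 : 2 * a * n + b ≤ a := by
      have := Int.emod_lt_of_pos (b + a) h2a; omega
    set b' : ℤ := 2 * a * n + b with hb'def
    set c' : ℤ := a * n ^ 2 + b * n + c with hc'def
    have hT : bqfAct (a, b, c) (matT n) = (a, b', c') := by
      rw [bqfAct_T]
    have hdisc' : b' ^ 2 - 4 * a * c' = -d := by
      rw [hb'def, hc'def]; linear_combination hdisc
    have hc'pos : 0 < c' := by nlinarith [sq_nonneg b']
    rcases le_or_gt a c' with hle | hlt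
    · refine ⟨matT n, ?_⟩
      rw [hT]
      exact ⟨abs_le.mpr ⟨hb1, hb2⟩, hle⟩
    · -- swap and recurse
      have hQ'' : bqfAct (a, b, c) (matT n * matS) = (c', -b', a) := by
        rw [bqfAct_mul, hT, bqfAct_S]
      obtain ⟨δ, hδ⟩ := ih (c', -b', a) (by omega) hc'pos
        (by simp only; linear_combination hdisc')
      refine ⟨matT n * matS * δ, ?_⟩
      rw [bqfAct_mul, hQ'']
      exact hδ

/-- For every positive `d` with `-d ≡ 0, 1 (mod 4)`, the set of orbits
`Q_d / PSL₂(ℤ)` is finite. -/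
theorem stmt4 (d : ℤ) (hd : 0 < d) (hmod : (-d) % 4 = 0 ∨ (-d) % 4 = 1) :
    Finite (Quot (bqfRel d)) := by
  -- the subtype of reduced forms
  let S : Type := {Q : QD d // |Q.1.2.1| ≤ Q.1.1 ∧ Q.1.1 ≤ Q.1.2.2}
  -- S is finite
  have hSfin : Finite S := by
    have hbox : ((Set.Icc (1:ℤ) d) ×ˢ (Set.Icc (-d) d)).Finite :=
      (Set.finite_Icc 1 d).prod (Set.finite_Icc (-d) d)
    have := hbox.to_subtype
    refine Finite.of_injective (fun Q : S =>
      (⟨(Q.1.1.1, Q.1.1.2.1), ?_⟩ : ((Set.Icc (1:ℤ) d) ×ˢ (Set.Icc (-d) d) : Set (ℤ × ℤ)))) ?_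
    · obtain ⟨⟨⟨a, b, c⟩, hpos, hdisc⟩, hb, hac⟩ := Q
      simp only at hpos hdisc hb hac ⊢
      have habs := abs_le.mp hb
      constructor
      · constructor
        · omega
        · nlinarith
      · constructor <;> nlinarith
    · rintro ⟨⟨⟨a, b, c⟩, hpos, hdisc⟩, hred⟩ ⟨⟨⟨a', b', c'⟩, hpos', hdisc'⟩, hred'⟩ h
      simp only [Subtype.mk.injEq, Prod.mk.injEq] at h ⊢
      obtain ⟨ha, hb⟩ := h
      subst ha; subst hb
      simp only at hdisc hdisc'
      have : c = c' := by nlinarith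
      simp [this]
  -- surjection from S onto the quotient
  refine Finite.of_surjective (fun Q : S => Quot.mk (bqfRel d) Q.1) ?_
  intro x
  induction x using Quot.ind with
  | _ Q =>
    obtain ⟨⟨a, b, c⟩, hpos, hdisc⟩ := Q
    obtain ⟨γ, h1, h2⟩ := bqf_reduce d hd (a.toNat) (a, b, c) le_rfl hpos hdisc
    have hRpos : 0 < (bqfAct (a, b, c) γ).1 := bqfAct_pos d hd _ hpos hdisc γ
    have hRdisc := bqfAct_disc (a, b, c) γ
    rw [hdisc] at hRdisc
    refine ⟨⟨⟨bqfAct (a, b, c) γ, hRpos, hRdisc⟩, h1, h2⟩, ?_⟩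
    apply Quot.sound
    refine ⟨γ⁻¹, ?_⟩
    simp only
    rw [← bqfAct_mul, mul_inv_cancel, bqfAct_one]
end

section
/- The formal power series identity Σ_{n≥1} spt(n)q^n = (Π_{n≥1} 1/(1−q^n)) · Σ_{n≥1} (q^n Π_{m=1}^{n−1}(1−q^m))/(1−q^n) holds in ℤ[[q]], and its first coefficients are q + 3q² + 5q³ + 10q⁴ + 14q⁵ + ⋯. -/
open Finset PowerSeries

/-- Andrews' smallest-parts function: total number of occurrences of the smallest part
over all partitions of `n`. -/
def spt (n : ℕ) : ℕ :=
  ∑ p : n.Partition, (p.parts.filter (fun x => ∀ y ∈ p.parts, x ≤ y)).card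

/-- The geometric series `1/(1 - q^n) = Σ_{k ≥ 0} q^{kn}` in `ℤ[[q]]`. -/
noncomputable def geomInv (n : ℕ) : PowerSeries ℤ :=
  PowerSeries.mk fun m => if n ∣ m then 1 else 0

/-!
After cancelling `Π_{m<n} (1 - qᵐ)` against the prefactor, the `n`-th summand is
`Σ_{k ≥ 1} q^{kn} · Π_{m ≥ n} 1/(1 - qᵐ)`, and `Π_{m ∈ s} 1/(1 - qᵐ)` counts the partitions
with parts in `s`. Removing `k` copies of `n` matches the partitions of `N` into parts `≥ n` having at least `k` parts equal to `n` with the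
partitions of `N - kn` into parts `≥ n`. Summing over `k ≥ 1` counts every partition of `N` with
smallest part `n` once for each occurrence of `n`, which is its contribution to `spt N`.
-/

open PowerSeries.WithPiTopology Nat.Partition

theorem coeff_geomInv (n d : ℕ) : coeff d (geomInv n) = if n ∣ d then 1 else 0 := coeff_mk _ _

theorem one_sub_X_pow_mul_geomInv {n : ℕ} (hn : 0 < n) :
    (1 - X ^ n) * geomInv n = 1 := by
  ext d
  rcases lt_or_ge d n with hd | hd
  · simp [sub_mul, coeff_X_pow_mul', hd.not_ge, coeff_geomInv, coeff_one,
      Nat.dvd_iff_mod_eq_zero, Nat.mod_eq_of_lt hd]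
  · obtain ⟨e, rfl⟩ := Nat.exists_eq_add_of_le' hd
    rw [sub_mul, one_mul, map_sub, coeff_X_pow_mul, coeff_geomInv, coeff_geomInv,
      if_congr Nat.dvd_add_self_right rfl rfl, sub_self, coeff_one, if_neg (by omega)]

theorem tsum_X_pow_mul_eq_geomInv {n : ℕ} (hn : 0 < n) :
    ∑' j, (X : ℤ⟦X⟧) ^ (n * j) = geomInv n := by
  have h := tsum_pow_mul_one_sub_of_constantCoeff_eq_zero (f := (X : ℤ⟦X⟧) ^ n) (by simp [hn.ne'])
  simp_rw [← pow_mul] at h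
  calc ∑' j, (X : ℤ⟦X⟧) ^ (n * j)
      = (∑' j, (X : ℤ⟦X⟧) ^ (n * j)) * ((1 - X ^ n) * geomInv n) := by
        rw [one_sub_X_pow_mul_geomInv hn, mul_one]
    _ = geomInv n := by rw [← mul_assoc, h, one_mul]

theorem coeff_prod_geomInv {s : Finset ℕ} (hs : 0 ∉ s) (M : ℕ) :
    coeff M (∏ i ∈ s, geomInv i) = #(restricted M (· ∈ s)) := by
  have hprod := hasProd_powerSeriesMk_card_restricted ℤ (· ∈ s)
  have hfin : HasProd (fun i ↦ if i + 1 ∈ s then ∑' j : ℕ, (X : ℤ⟦X⟧) ^ ((i + 1) * j) else 1)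
      (∏ i ∈ s.image (· - 1), if i + 1 ∈ s then ∑' j : ℕ, (X : ℤ⟦X⟧) ^ ((i + 1) * j) else 1) :=
    hasProd_prod_of_ne_finset_one fun i hi ↦ if_neg fun h ↦ hi (mem_image.2 ⟨i + 1, h, rfl⟩)
  have hpos (i : ℕ) (hi : i ∈ s) : 0 < i := Nat.pos_of_ne_zero fun h ↦ hs (h ▸ hi)
  rw [← coeff_mk M (fun n ↦ (#(restricted n (· ∈ s)) : ℤ)), hprod.unique hfin,
    prod_image fun i hi j hj ↦ Nat.sub_one_cancel (hpos i hi) (hpos j hj)]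
  refine congrArg _ (prod_congr rfl fun i hi ↦ ?_)
  rw [Nat.sub_add_cancel (hpos i hi), if_pos hi, tsum_X_pow_mul_eq_geomInv (hpos i hi)]

theorem coeff_geomInv_mul {n : ℕ} (hn : 0 < n) (M : ℕ) (F : ℤ⟦X⟧) :
    coeff M (geomInv n * F) = ∑ k ∈ range (M / n + 1), coeff (M - k * n) F := by
  rw [coeff_mul, Nat.sum_antidiagonal_eq_sum_range_succ_mk]
  simp only [coeff_geomInv, ite_mul, one_mul, zero_mul]
  rw [← sum_filter]
  refine (sum_nbij' (· * n) (· / n) ?_ ?_ ?_ ?_ fun _ _ ↦ rfl).symm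
  · intro k hk
    simp only [mem_range, mem_filter] at hk ⊢
    exact ⟨Nat.lt_succ_of_le ((Nat.le_div_iff_mul_le hn).1 (Nat.lt_succ_iff.1 hk)), dvd_mul_left n k⟩
  · intro i hi
    simp only [mem_range, mem_filter] at hi ⊢
    exact Nat.lt_succ_of_le (Nat.div_le_div_right (Nat.lt_succ_iff.1 hi.1))
  · intro k _
    exact Nat.mul_div_cancel k hn
  · intro i hi
    exact Nat.div_mul_cancel (mem_filter.1 hi).2

theorem card_filter_lt_count_restricted {s : Finset ℕ} {n k M : ℕ} (hn : 0 < n) (hns : n ∈ s)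
    (hk : k * n ≤ M) :
    #{p ∈ restricted (M + n) (· ∈ s) | k < p.parts.count n} = #(restricted (M - k * n) (· ∈ s)) := by
  set r := Multiset.replicate (k + 1) n
  have hr : r.sum = k * n + n := by rw [Multiset.sum_replicate, smul_eq_mul, add_one_mul]
  have hr_le {p : (M + n).Partition} (hp : k < p.parts.count n) : r ≤ p.parts :=
    Multiset.le_count_iff_replicate_le.1 hp
  refine card_bij'
    (fun p hp ↦ ⟨p.parts - r, fun hi ↦ p.parts_pos (Multiset.mem_of_le tsub_le_self hi), ?_⟩)
    (fun q _ ↦ ⟨q.parts + r, ?_, ?_⟩) ?_ ?_ ?_ ?_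
  · have hsum := congrArg Multiset.sum (tsub_add_cancel_of_le (hr_le (mem_filter.1 hp).2))
    rw [Multiset.sum_add, p.parts_sum, hr] at hsum
    omega
  · intro i hi
    rcases Multiset.mem_add.1 hi with hi | hi
    · exact q.parts_pos hi
    · exact (Multiset.eq_of_mem_replicate hi).symm ▸ hn
  · rw [Multiset.sum_add, q.parts_sum, hr]
    omega
  · intro p hp
    simp only [restricted, mem_filter, mem_univ, true_and] at hp ⊢
    exact fun i hi ↦ hp.1 i (Multiset.mem_of_le tsub_le_self hi)
  · intro q hq
    simp only [restricted, mem_filter, mem_univ, true_and] at hq ⊢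
    refine ⟨fun i hi ↦ ?_, ?_⟩
    · rcases Multiset.mem_add.1 hi with hi | hi
      · exact hq i hi
      · exact (Multiset.eq_of_mem_replicate hi).symm ▸ hns
    · simp [r, Multiset.count_add]
  · intro p hp
    exact Nat.Partition.ext (tsub_add_cancel_of_le (hr_le (mem_filter.1 hp).2))
  · intro q _
    exact Nat.Partition.ext (add_tsub_cancel_right _ _)

theorem count_mul_le_sum (m : Multiset ℕ) (n : ℕ) : m.count n * n ≤ m.sum := by
  obtain ⟨t, ht⟩ := Multiset.le_iff_exists_add.1
    ((Multiset.le_count_iff_replicate_le (a := n) (s := m)).1 le_rfl)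
  have hsum := congrArg Multiset.sum ht
  rw [Multiset.sum_add, Multiset.sum_replicate, smul_eq_mul] at hsum
  omega

theorem sum_count_restricted_add {s : Finset ℕ} {n : ℕ} (hn : 0 < n) (hns : n ∈ s) (M : ℕ) :
    ∑ p ∈ restricted (M + n) (· ∈ s), p.parts.count n
      = ∑ k ∈ range (M / n + 1), #(restricted (M - k * n) (· ∈ s)) := by
  have hcount (p : (M + n).Partition) :
      p.parts.count n = ∑ k ∈ range (M / n + 1), if k < p.parts.count n then 1 else 0 := by
    have h := count_mul_le_sum p.parts n
    rw [p.parts_sum, ← Nat.le_div_iff_mul_le hn, Nat.add_div_right _ hn] at h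
    rw [← card_filter, ← card_range (p.parts.count n)]
    congr 1
    ext k
    simp only [mem_range, mem_filter, card_range]
    omega
  calc ∑ p ∈ restricted (M + n) (· ∈ s), p.parts.count n
      = ∑ k ∈ range (M / n + 1), ∑ p ∈ restricted (M + n) (· ∈ s),
          if k < p.parts.count n then 1 else 0 := by
        rw [sum_comm]
        exact sum_congr rfl fun p _ ↦ hcount p
    _ = _ := by
        refine sum_congr rfl fun k hk ↦ ?_
        rw [← card_filter]
        exact card_filter_lt_count_restricted hn hns
          ((Nat.le_div_iff_mul_le hn).1 (Nat.lt_succ_iff.1 (mem_range.1 hk)))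

theorem spt_eq_sum_sum_count (N : ℕ) :
    spt N = ∑ n ∈ Icc 1 N, ∑ p ∈ restricted N (· ∈ Icc n N), p.parts.count n := by
  simp only [spt, restricted, sum_filter]
  rw [sum_comm]
  refine sum_congr rfl fun p _ ↦ ?_
  rw [← Multiset.sum_count_eq_card (s := Icc 1 N)]
  · refine sum_congr rfl fun n _ ↦ ?_
    rw [Multiset.count_filter]
    exact if_congr ⟨fun h i hi ↦ mem_Icc.2 ⟨h i hi, le_of_mem_parts hi⟩,
      fun h i hi ↦ (mem_Icc.1 (h i hi)).1⟩ rfl rfl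
  · intro i hi
    have hi := Multiset.mem_of_mem_filter hi
    exact mem_Icc.2 ⟨p.parts_pos hi, le_of_mem_parts hi⟩

theorem prod_geomInv_mul_term {n N : ℕ} (hn : 0 < n) (hnN : n ≤ N) :
    (∏ m ∈ Icc 1 N, geomInv m) * (X ^ n * (∏ m ∈ Icc 1 (n - 1), (1 - X ^ m)) * geomInv n)
      = X ^ n * (geomInv n * ∏ m ∈ Icc n N, geomInv m) := by
  obtain ⟨k, rfl⟩ : ∃ k, n = k + 1 := ⟨n - 1, by omega⟩
  have hsplit : (∏ m ∈ Icc 1 k, geomInv m) * ∏ m ∈ Icc (k + 1) N, geomInv m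
      = ∏ m ∈ Icc 1 N, geomInv m := by
    simp only [← Ico_add_one_right_eq_Icc]
    exact prod_Ico_consecutive _ (by omega) (by omega)
  have hinv : (∏ m ∈ Icc 1 k, geomInv m) * ∏ m ∈ Icc 1 k, (1 - X ^ m) = 1 := by
    rw [← prod_mul_distrib]
    exact prod_eq_one fun m hm ↦ by
      rw [mul_comm, one_sub_X_pow_mul_geomInv (mem_Icc.1 hm).1]
  rw [Nat.add_sub_cancel, ← hsplit]
  linear_combination (X ^ (k + 1) * geomInv (k + 1) * ∏ m ∈ Icc (k + 1) N, geomInv m) * hinv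

theorem coeff_prod_geomInv_mul_term {n N : ℕ} (hn : 0 < n) (hnN : n ≤ N) :
    coeff N ((∏ m ∈ Icc 1 N, geomInv m) *
        ((X : ℤ⟦X⟧) ^ n * (∏ m ∈ Icc 1 (n - 1), (1 - X ^ m)) * geomInv n))
      = ((∑ p ∈ restricted N (· ∈ Icc n N), p.parts.count n : ℕ) : ℤ) := by
  obtain ⟨M, rfl⟩ : ∃ M, N = M + n := ⟨N - n, by omega⟩
  rw [prod_geomInv_mul_term hn hnN, coeff_X_pow_mul, coeff_geomInv_mul hn,
    sum_count_restricted_add hn (left_mem_Icc.2 hnN)]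
  push_cast
  exact sum_congr rfl fun k _ ↦ coeff_prod_geomInv (by rw [mem_Icc]; omega) _

-- Contains the parts of every partition of `n` into at most `k` parts; unlike
-- `Finset.univ : Finset n.Partition`, it can be evaluated by the kernel.
def partitionMultisets : ℕ → ℕ → Finset (Multiset ℕ)
  | 0, n => if n = 0 then {0} else ∅
  | k + 1, n => partitionMultisets 0 n ∪
      (Icc 1 n).biUnion fun a ↦ (partitionMultisets k (n - a)).image (a ::ₘ ·)

theorem mem_partitionMultisets {m : Multiset ℕ} (hm : ∀ x ∈ m, 0 < x) {k : ℕ}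
    (hk : Multiset.card m ≤ k) : m ∈ partitionMultisets k m.sum := by
  induction m using Multiset.induction_on generalizing k with
  | empty => cases k <;> simp [partitionMultisets]
  | cons a s ih =>
    obtain ⟨k, rfl⟩ : ∃ k', k = k' + 1 := ⟨k - 1, by rw [Multiset.card_cons] at hk; omega⟩
    have ha := hm a (Multiset.mem_cons_self a s)
    have hs := ih (fun x hx ↦ hm x (Multiset.mem_cons_of_mem hx)) (by simpa using hk)
    simp only [partitionMultisets, Multiset.sum_cons, mem_union, mem_biUnion, mem_Icc, mem_image]
    exact Or.inr ⟨a, ⟨ha, Nat.le_add_right a _⟩, s, by rwa [Nat.add_sub_cancel_left], rfl⟩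

theorem spt_eq_sum_partitionMultisets (N : ℕ) :
    spt N = ∑ m ∈ partitionMultisets N N with m.sum = N ∧ ∀ x ∈ m, 0 < x,
      (m.filter fun x ↦ ∀ y ∈ m, x ≤ y).card := by
  refine sum_bij' (fun p _ ↦ p.parts)
    (fun m hm ↦ ⟨m, (mem_filter.1 hm).2.2 _, (mem_filter.1 hm).2.1⟩) (fun p _ ↦ ?_)
    (fun _ _ ↦ mem_univ _) (fun _ _ ↦ rfl) (fun _ _ ↦ rfl) (fun _ _ ↦ rfl)
  have hcard : Multiset.card p.parts ≤ N := by
    simpa [p.parts_sum] using Multiset.card_nsmul_le_sum fun _ hx ↦ p.parts_pos hx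
  refine mem_filter.2 ⟨?_, p.parts_sum, fun _ ↦ p.parts_pos⟩
  simpa [p.parts_sum] using mem_partitionMultisets (fun _ ↦ p.parts_pos) hcard

theorem spt_one_to_five : spt 1 = 1 ∧ spt 2 = 3 ∧ spt 3 = 5 ∧ spt 4 = 10 ∧ spt 5 = 14 := by
  simp only [spt_eq_sum_partitionMultisets]
  decide +kernel

/-- The identity `Σ_{n≥1} spt(n) qⁿ = (Π_{n≥1} 1/(1-qⁿ)) · Σ_{n≥1} qⁿ Π_{m=1}^{n-1}(1-qᵐ)/(1-qⁿ)`
in `ℤ[[q]]`: `geomInv n` really is `1/(1-qⁿ)`, each coefficient of the left-hand side equals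
the corresponding coefficient of the right-hand side (the infinite product and sum truncated
harmlessly at `N`), and the initial coefficients are `q + 3q² + 5q³ + 10q⁴ + 14q⁵ + ⋯`. -/
theorem stmt17 :
    (∀ n : ℕ, 1 ≤ n → (1 - (X : PowerSeries ℤ) ^ n) * geomInv n = 1) ∧
    (∀ N : ℕ,
      PowerSeries.coeff N (PowerSeries.mk fun n => if n = 0 then 0 else (spt n : ℤ))
        = PowerSeries.coeff N ((∏ n ∈ Finset.Icc 1 N, geomInv n) *
            ∑ n ∈ Finset.Icc 1 N,
              (X : PowerSeries ℤ) ^ n *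
                (∏ m ∈ Finset.Icc 1 (n - 1), (1 - (X : PowerSeries ℤ) ^ m)) * geomInv n)) ∧
    spt 1 = 1 ∧ spt 2 = 3 ∧ spt 3 = 5 ∧ spt 4 = 10 ∧ spt 5 = 14 := by
  refine ⟨fun n hn ↦ one_sub_X_pow_mul_geomInv hn, fun N ↦ ?_, spt_one_to_five⟩
  rw [coeff_mk, mul_sum, map_sum, sum_congr rfl fun n hn ↦
    coeff_prod_geomInv_mul_term (mem_Icc.1 hn).1 (mem_Icc.1 hn).2, ← Nat.cast_sum,
    ← spt_eq_sum_sum_count]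
  split_ifs with hN
  · simp [hN, spt_eq_sum_sum_count]
  · rfl
end

section
/- Let f : (a,b) → ℝ be a C² function with a unique maximum at c ∈ (a,b) and f''(c) < 0, and suppose ∫_a^b e^{λf(t)}dt is finite for large λ. Then as λ → ∞, ∫_a^b e^{λ f(t)} dt ∼ e^{λ f(c)} · (2π / (λ |f''(c)|))^{1/2}, i.e. the ratio of the two sides tends to 1. -/
/-!
Near `c`, second-order Taylor expansion squeezes `f t - f c` between `-B (t - c)²` for `B`
slightly above and slightly below `|f''(c)| / 2`. On a fixed window `|t - c| < δ` the substitution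
`u = √λ (t - c)` turns `√λ ∫ e^{-λ B (t - c)²}` into `∫_{|u| < √λ δ} e^{-B u²}`, which tends to
`√(π / B)`. Off the window `f ≤ f c - ε`, so that part of `∫ e^{λ (f - f c)}` is `O(e^{-ε λ})`.
Letting `B → |f''(c)| / 2` gives `√λ e^{-λ f(c)} ∫ e^{λ f} → √(2π / |f''(c)|)`.
-/

open Filter MeasureTheory Set Topology Asymptotics Real

theorem isLittleO_sub_taylor_two {f : ℝ → ℝ} {c : ℝ}
    (hf : ∀ᶠ t in 𝓝 c, HasDerivAt f (deriv f t) t)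
    (hf' : HasDerivAt (deriv f) (deriv (deriv f) c) c) :
    (fun t => f t - f c - deriv f c * (t - c) - deriv (deriv f) c / 2 * (t - c) ^ 2)
      =o[𝓝 c] fun t => (t - c) ^ 2 := by
  obtain ⟨ε, hε, hball⟩ := Metric.eventually_nhds_iff_ball.1 hf
  have hnhds : 𝓝[Metric.ball c ε] c = 𝓝 c := nhdsWithin_eq_nhds.2 (Metric.ball_mem_nhds c hε)
  have key := (convex_ball c ε).isLittleO_pow_succ_real (Metric.mem_ball_self hε) (n := 1)
    (f := fun t => f t - deriv f c * (t - c) - deriv (deriv f) c / 2 * (t - c) ^ 2)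
    (f' := fun t => deriv f t - deriv f c - deriv (deriv f) c * (t - c)) ?_ ?_
  · rw [hnhds] at key
    simpa [sub_right_comm _ (f c)] using key
  · intro t ht
    have hsub := (hasDerivAt_id' t).sub_const c
    have hquad := ((hball t ht).sub (hsub.const_mul (deriv f c))).sub
      ((hsub.fun_pow 2).const_mul (deriv (deriv f) c / 2))
    exact hquad.hasDerivWithinAt.congr_deriv (by ring)
  · rw [hnhds]
    simpa [mul_comm] using hasDerivAt_iff_isLittleO.1 hf'

theorem ContDiffOn.isLittleO_sub_taylor_two {f : ℝ → ℝ} {s : Set ℝ} {c : ℝ}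
    (hf : ContDiffOn ℝ 2 f s) (hs : IsOpen s) (hc : c ∈ s) :
    (fun t => f t - f c - deriv f c * (t - c) - deriv (deriv f) c / 2 * (t - c) ^ 2)
      =o[𝓝 c] fun t => (t - c) ^ 2 := by
  have hf' : ContDiffOn ℝ 1 (deriv f) s := hf.deriv_of_isOpen hs (by norm_num)
  refine _root_.isLittleO_sub_taylor_two ?_ ?_
  · filter_upwards [hs.mem_nhds hc] with t ht
    exact ((hf.differentiableOn two_ne_zero t ht).differentiableAt (hs.mem_nhds ht)).hasDerivAt
  · exact ((hf'.differentiableOn one_ne_zero c hc).differentiableAt (hs.mem_nhds hc)).hasDerivAt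

section ExpIntegral

variable {α : Type*} [MeasurableSpace α] {μ : Measure α} {s : Set α}

theorem setIntegral_exp_mul_le_of_le {g h : α → ℝ} {lam : ℝ} (hs : MeasurableSet s)
    (hlam : 0 ≤ lam) (hgh : ∀ t ∈ s, g t ≤ h t)
    (hint : IntegrableOn (fun t => exp (lam * h t)) s μ) :
    ∫ t in s, exp (lam * g t) ∂μ ≤ ∫ t in s, exp (lam * h t) ∂μ :=
  integral_mono_of_nonneg (ae_of_all _ fun _ => (exp_pos _).le) hint <|
    (ae_restrict_iff' hs).2 <| ae_of_all _ fun t ht =>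
      exp_le_exp.2 (mul_le_mul_of_nonneg_left (hgh t ht) hlam)

/-- For `λ ≥ L`, `exp (λ g) ≤ exp (-(λ - L) ε) * exp (L g)` on `s`. -/
theorem tendsto_sqrt_mul_setIntegral_exp_of_le_neg {g : α → ℝ} {L ε : ℝ} (hs : MeasurableSet s)
    (hε : 0 < ε) (hg : ∀ t ∈ s, g t ≤ -ε) (hL : IntegrableOn (fun t => exp (L * g t)) s μ) :
    Tendsto (fun lam => √lam * ∫ t in s, exp (lam * g t) ∂μ) atTop (𝓝 0) := by
  set C := ∫ t in s, exp (L * g t) ∂μ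
  have hbound : ∀ lam, L ≤ lam →
      ∫ t in s, exp (lam * g t) ∂μ ≤ exp (L * ε) * C * exp (-ε * lam) := by
    intro lam hlam
    calc ∫ t in s, exp (lam * g t) ∂μ
        ≤ ∫ t in s, exp (L * ε) * exp (-ε * lam) * exp (L * g t) ∂μ := by
          refine integral_mono_of_nonneg (ae_of_all _ fun _ => (exp_pos _).le) (hL.const_mul _)
            ((ae_restrict_iff' hs).2 (ae_of_all _ fun t ht => ?_))
          dsimp only
          rw [← exp_add, ← exp_add]
          exact exp_le_exp.2 (by nlinarith [hg t ht])
      _ = exp (L * ε) * C * exp (-ε * lam) := by rw [integral_const_mul]; ring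
  have hdecay : Tendsto (fun lam => exp (L * ε) * C * (lam ^ (1 / 2 : ℝ) * exp (-ε * lam)))
      atTop (𝓝 0) := by
    simpa using (tendsto_rpow_mul_exp_neg_mul_atTop_nhds_zero _ ε hε).const_mul (exp (L * ε) * C)
  refine tendsto_of_tendsto_of_tendsto_of_le_of_le' tendsto_const_nhds hdecay ?_ ?_
  · filter_upwards with lam
    exact mul_nonneg (sqrt_nonneg _) (integral_nonneg fun _ => (exp_pos _).le)
  · filter_upwards [eventually_ge_atTop L] with lam hlam
    calc √lam * ∫ t in s, exp (lam * g t) ∂μ ≤ √lam * (exp (L * ε) * C * exp (-ε * lam)) :=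
          mul_le_mul_of_nonneg_left (hbound lam hlam) (sqrt_nonneg _)
      _ = exp (L * ε) * C * (lam ^ (1 / 2 : ℝ) * exp (-ε * lam)) := by
          rw [sqrt_eq_rpow]; ring

end ExpIntegral

theorem tendsto_sqrt_mul_integral_ball_exp_neg_mul_sq {B δ : ℝ} (hB : 0 < B) (hδ : 0 < δ) (c : ℝ) :
    Tendsto (fun lam => √lam * ∫ t in Metric.ball c δ, exp (lam * -(B * (t - c) ^ 2)))
      atTop (𝓝 √(π / B)) := by
  have hbound : Tendsto (fun lam => √lam * δ) atTop atTop := tendsto_sqrt_atTop.atTop_mul_const hδ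
  have hlim := intervalIntegral_tendsto_integral (integrable_exp_neg_mul_sq hB)
    (a := fun lam => -(√lam * δ)) (tendsto_neg_atTop_atBot.comp hbound) hbound
  rw [integral_gaussian] at hlim
  refine hlim.congr' ?_
  filter_upwards [eventually_gt_atTop 0] with lam hlam
  have hsqrt : 0 < √lam := sqrt_pos.2 hlam
  have hsq : ∀ t, lam * -(B * (t - c) ^ 2) = -B * (√lam * t - √lam * c) ^ 2 := by
    intro t; rw [← mul_sub, mul_pow, sq_sqrt hlam.le]; ring
  rw [ball_eq_Ioo, ← integral_Ioc_eq_integral_Ioo, ← intervalIntegral.integral_of_le (by linarith)]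
  simp_rw [hsq]
  rw [intervalIntegral.integral_comp_mul_sub (fun u => exp (-B * u ^ 2)) hsqrt.ne', smul_eq_mul,
    ← mul_assoc, mul_inv_cancel₀ hsqrt.ne', one_mul]
  congr 1 <;> ring

section Laplace

variable {f : ℝ → ℝ} {s : Set ℝ} {c A B : ℝ}

theorem eventually_lt_sqrt_mul_setIntegral_exp {l : ℝ} (hsc : s ∈ 𝓝 c)
    (hquad : (fun t => f t - f c + A / 2 * (t - c) ^ 2) =o[𝓝 c] fun t => (t - c) ^ 2)
    (hB : A / 2 < B) (hB₀ : 0 < B)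
    (hint : ∀ᶠ lam in atTop, IntegrableOn (fun t => exp (lam * (f t - f c))) s)
    (hl : l < √(π / B)) :
    ∀ᶠ lam in atTop, l < √lam * ∫ t in s, exp (lam * (f t - f c)) := by
  have hnear : ∀ᶠ t in 𝓝 c, t ∈ s ∧ -(B * (t - c) ^ 2) ≤ f t - f c := by
    filter_upwards [hsc, hquad.bound (sub_pos.2 hB)] with t hts ht
    rw [norm_of_nonneg (sq_nonneg (t - c)), norm_eq_abs, abs_le] at ht
    exact ⟨hts, by linarith [ht.1]⟩
  obtain ⟨δ, hδ, hball⟩ := Metric.eventually_nhds_iff_ball.1 hnear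
  have hsub : Metric.ball c δ ⊆ s := fun t ht => (hball t ht).1
  filter_upwards [(tendsto_sqrt_mul_integral_ball_exp_neg_mul_sq hB₀ hδ c).eventually
    (lt_mem_nhds hl), hint, eventually_ge_atTop 0] with lam hgauss hlamint hlam
  calc l < √lam * ∫ t in Metric.ball c δ, exp (lam * -(B * (t - c) ^ 2)) := hgauss
    _ ≤ √lam * ∫ t in Metric.ball c δ, exp (lam * (f t - f c)) :=
        mul_le_mul_of_nonneg_left (setIntegral_exp_mul_le_of_le Metric.isOpen_ball.measurableSet
          hlam (fun t ht => (hball t ht).2) (hlamint.mono_set hsub)) (sqrt_nonneg _)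
    _ ≤ √lam * ∫ t in s, exp (lam * (f t - f c)) :=
        mul_le_mul_of_nonneg_left (setIntegral_mono_set hlamint
          (ae_of_all _ fun _ => (exp_pos _).le) hsub.eventuallyLE) (sqrt_nonneg _)

theorem eventually_sqrt_mul_setIntegral_exp_lt {r : ℝ} (hs : MeasurableSet s) (hsc : s ∈ 𝓝 c)
    (hquad : (fun t => f t - f c + A / 2 * (t - c) ^ 2) =o[𝓝 c] fun t => (t - c) ^ 2)
    (hB : B < A / 2) (hB₀ : 0 < B)
    (hsep : ∀ δ > 0, ∃ ε > 0, ∀ t ∈ s, δ ≤ |t - c| → f t ≤ f c - ε)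
    (hint : ∀ᶠ lam in atTop, IntegrableOn (fun t => exp (lam * (f t - f c))) s)
    (hr : √(π / B) < r) :
    ∀ᶠ lam in atTop, √lam * ∫ t in s, exp (lam * (f t - f c)) < r := by
  have hnear : ∀ᶠ t in 𝓝 c, t ∈ s ∧ f t - f c ≤ -(B * (t - c) ^ 2) := by
    filter_upwards [hsc, hquad.bound (sub_pos.2 hB)] with t hts ht
    rw [norm_of_nonneg (sq_nonneg (t - c)), norm_eq_abs, abs_le] at ht
    exact ⟨hts, by linarith [ht.2]⟩
  obtain ⟨δ, hδ, hball⟩ := Metric.eventually_nhds_iff_ball.1 hnear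
  have hsub : Metric.ball c δ ⊆ s := fun t ht => (hball t ht).1
  obtain ⟨ε, hε, hfar⟩ := hsep δ hδ
  obtain ⟨L, hL⟩ := hint.exists
  have htail := tendsto_sqrt_mul_setIntegral_exp_of_le_neg
    (hs.diff Metric.isOpen_ball.measurableSet) hε
    (fun t ht => by linarith [hfar t ht.1 (not_lt.1 ht.2)]) (hL.mono_set sdiff_subset)
  have hlim := (tendsto_sqrt_mul_integral_ball_exp_neg_mul_sq hB₀ hδ c).add htail
  rw [add_zero] at hlim
  filter_upwards [hlim.eventually (gt_mem_nhds hr), hint, eventually_ge_atTop 0]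
    with lam hlt hlamint hlam
  calc √lam * ∫ t in s, exp (lam * (f t - f c))
      = (√lam * ∫ t in Metric.ball c δ, exp (lam * (f t - f c)))
          + √lam * ∫ t in s \ Metric.ball c δ, exp (lam * (f t - f c)) := by
        rw [← mul_add, ← integral_inter_add_sdiff Metric.isOpen_ball.measurableSet hlamint,
          inter_eq_right.2 hsub]
    _ ≤ (√lam * ∫ t in Metric.ball c δ, exp (lam * -(B * (t - c) ^ 2)))
          + √lam * ∫ t in s \ Metric.ball c δ, exp (lam * (f t - f c)) := by
        have hgauss : IntegrableOn (fun t => exp (lam * -(B * (t - c) ^ 2))) (Metric.ball c δ) :=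
          (Continuous.continuousOn (by fun_prop)).integrableOn_compact
            (isCompact_closedBall c δ) |>.mono_set Metric.ball_subset_closedBall
        exact add_le_add_left (mul_le_mul_of_nonneg_left (setIntegral_exp_mul_le_of_le
          Metric.isOpen_ball.measurableSet hlam (fun t ht => (hball t ht).2) hgauss)
          (sqrt_nonneg _)) _
    _ < r := hlt

theorem tendsto_sqrt_mul_setIntegral_exp_of_isLittleO (hs : MeasurableSet s) (hsc : s ∈ 𝓝 c)
    (hA : 0 < A)
    (hquad : (fun t => f t - f c + A / 2 * (t - c) ^ 2) =o[𝓝 c] fun t => (t - c) ^ 2)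
    (hsep : ∀ δ > 0, ∃ ε > 0, ∀ t ∈ s, δ ≤ |t - c| → f t ≤ f c - ε)
    (hint : ∀ᶠ lam in atTop, IntegrableOn (fun t => exp (lam * f t)) s) :
    Tendsto (fun lam => √lam * ∫ t in s, exp (lam * (f t - f c))) atTop (𝓝 √(2 * π / A)) := by
  have hint' : ∀ᶠ lam in atTop, IntegrableOn (fun t => exp (lam * (f t - f c))) s := by
    filter_upwards [hint] with lam h
    simp only [mul_sub, exp_sub]
    exact h.div_const (exp (lam * f c))
  have hA2 : 0 < A / 2 := by positivity
  have hφ : ContinuousAt (fun B => √(π / B)) (A / 2) :=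
    continuous_sqrt.continuousAt.comp (continuousAt_const.div continuousAt_id hA2.ne')
  rw [show 2 * π / A = π / (A / 2) by field_simp]
  refine tendsto_order.2 ⟨fun l hl => ?_, fun r hr => ?_⟩
  · obtain ⟨B, hlB, hB⟩ := ((hφ.eventually (lt_mem_nhds hl)).filter_mono nhdsWithin_le_nhds
      |>.and self_mem_nhdsWithin).exists (f := 𝓝[>] (A / 2))
    exact eventually_lt_sqrt_mul_setIntegral_exp hsc hquad hB (hA2.trans hB) hint' hlB
  · obtain ⟨B, ⟨hBr, hB₀⟩, hB⟩ := (((hφ.eventually (gt_mem_nhds hr)).and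
      (eventually_gt_nhds hA2)).filter_mono nhdsWithin_le_nhds
      |>.and self_mem_nhdsWithin).exists (f := 𝓝[<] (A / 2))
    exact eventually_sqrt_mul_setIntegral_exp_lt hs hsc hquad hB hB₀ hsep hint' hBr

end Laplace

theorem stmt18_general (a b c : ℝ) (f : ℝ → ℝ) (hc : c ∈ Set.Ioo a b)
    (hf : ContDiffOn ℝ 2 f (Set.Ioo a b))
    (hmax : ∀ t ∈ Set.Ioo a b, t ≠ c → f t < f c)
    (hsep : ∀ δ > 0, ∃ ε > 0, ∀ t ∈ Set.Ioo a b, δ ≤ |t - c| → f t ≤ f c - ε)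
    (hf'' : deriv (deriv f) c < 0)
    (hint : ∀ᶠ lam in atTop, IntegrableOn (fun t => Real.exp (lam * f t)) (Set.Ioo a b)) :
    Tendsto
      (fun lam : ℝ =>
        (∫ t in Set.Ioo a b, Real.exp (lam * f t)) /
          (Real.exp (lam * f c) * Real.sqrt (2 * Real.pi / (lam * |deriv (deriv f) c|))))
      atTop (nhds 1) := by
  set A := |deriv (deriv f) c| with hA_def
  have hA : 0 < A := abs_pos.2 hf''.ne
  have hcrit : deriv f c = 0 := IsLocalMax.deriv_eq_zero <|
    eventually_of_mem (isOpen_Ioo.mem_nhds hc) fun t ht =>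
      (eq_or_ne t c).elim (fun h => h ▸ le_rfl) fun h => (hmax t ht h).le
  have hquad : (fun t => f t - f c + A / 2 * (t - c) ^ 2) =o[𝓝 c] fun t => (t - c) ^ 2 := by
    simpa [hcrit, hA_def, abs_of_neg hf'', neg_div, ← sub_eq_add_neg] using
      hf.isLittleO_sub_taylor_two isOpen_Ioo hc
  have hlim := (tendsto_sqrt_mul_setIntegral_exp_of_isLittleO measurableSet_Ioo
    (isOpen_Ioo.mem_nhds hc) hA hquad hsep hint).div_const √(2 * π / A)
  rw [div_self (by positivity)] at hlim
  refine hlim.congr' ?_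
  filter_upwards [eventually_gt_atTop 0] with lam hlam
  have hfactor : ∫ t in Ioo a b, exp (lam * f t)
      = exp (lam * f c) * ∫ t in Ioo a b, exp (lam * (f t - f c)) := by
    rw [← integral_const_mul]
    simp only [← exp_add, mul_sub, add_sub_cancel]
  rw [hfactor, show 2 * π / (lam * A) = 2 * π / A / lam by field_simp, sqrt_div' _ hlam.le]
  field_simp

/-- Laplace's method: if `f` is `C²` on `(a,b)` with a unique maximum at `c ∈ (a,b)`,
`f''(c) < 0`, the maximum is isolated uniformly (for every `δ > 0` the values away from
`c` stay below `f(c)` by a fixed amount), and the integrals `∫_a^b e^{λ f}` exist for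
large `λ`, then `∫_a^b e^{λ f(t)} dt ∼ e^{λ f(c)} (2π/(λ |f''(c)|))^{1/2}` as `λ → ∞`,
i.e. the ratio of the two sides tends to `1`. -/
theorem stmt18 (a b c : ℝ) (f : ℝ → ℝ) (hab : a < b) (hc : c ∈ Set.Ioo a b)
    (hf : ContDiffOn ℝ 2 f (Set.Ioo a b))
    (hmax : ∀ t ∈ Set.Ioo a b, t ≠ c → f t < f c)
    (hsep : ∀ δ > 0, ∃ ε > 0, ∀ t ∈ Set.Ioo a b, δ ≤ |t - c| → f t ≤ f c - ε)
    (hf'' : deriv (deriv f) c < 0)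
    (hint : ∀ᶠ lam in atTop, IntegrableOn (fun t => Real.exp (lam * f t)) (Set.Ioo a b)) :
    Tendsto
      (fun lam : ℝ =>
        (∫ t in Set.Ioo a b, Real.exp (lam * f t)) /
          (Real.exp (lam * f c) * Real.sqrt (2 * Real.pi / (lam * |deriv (deriv f) c|))))
      atTop (nhds 1) :=
  stmt18_general a b c f hc hf hmax hsep hf'' hint
end
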